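/- arXiv:1505.05103 — 4 statements merged into one kernel-verified Lean document; each statement's English description precedes it below -/
import Mathlib

section
/- Let E be a finite-dimensional complex vector space and let f : E → E be an invertible linear map. Then there exists a unique linear map g : E → E whose spectrum is contained in Σ₁ such that f = exp(2πi·g). -/
open Complex

noncomputable section

/-- The set Σ: complex numbers `α` with `-1 ≤ Re α ≤ 0`, `Im α ≥ 0` if `Re α = -1`,
and `Im α < 0` if `Re α = 0`. -/
def SigmaSet : Set ℂ :=
  {α : ℂ | -1 ≤ α.re ∧ α.re ≤ 0 ∧ (α.re = -1 → 0 ≤ α.im) ∧ (α.re = 0 → α.im < 0)}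

/-- The set Σ₁ := Σ + 1. -/
def Sigma1 : Set ℂ := {α : ℂ | α - 1 ∈ SigmaSet}

/-- The constant `2πi`. -/
def twoPiI : ℂ := 2 * Real.pi * Complex.I

/-- The exponential `exp(2πi·f)` of an endomorphism `f`. -/
def expEnd {E : Type*} [NormedAddCommGroup E] [NormedSpace ℂ E] (f : E →L[ℂ] E) :
    E →L[ℂ] E :=
  NormedSpace.exp (twoPiI • f)

/-!
The map `c ↦ exp (2πi c)` is injective on Σ₁ and maps it onto `ℂ \ {0}`. Let `n = dim E`, let
`c_l ∈ Σ₁` be the preimage of an eigenvalue `l` of `f`, and let `P` be a polynomial that agrees to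
order `n` at every such `l` with the branch of `(2πi)⁻¹ log` taking the value `c_l` at `l`
(Chinese remainder theorem). On the generalized `l`-eigenspace `(f - l)ⁿ` vanishes, so there
`g = P(f)` acts as `c_l + (2πi)⁻¹ log (l⁻¹ f)` with a finite logarithm series, and
`exp (2πi g) = f` by the polynomial identity `exp ∘ log ≡ 1 + X mod Xⁿ` for the truncated series.

Conversely, if `exp (2πi g) = f` and the spectrum of `g` lies in Σ₁, then on the generalized
`c`-eigenspace of `g` the operator `f` acts as the Taylor polynomial of `exp (2πi ·)` at `c`
evaluated at `g`, so `P(f)` acts there as a polynomial in `g`. Injectivity on Σ₁ gives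
`c = c_l` for `l = exp (2πi c)`, and `log ∘ exp ≡ X mod Xⁿ` turns that polynomial into `g`.
As these eigenspaces span `E`, every solution equals `P(f)`.
-/

open Polynomial Module

section PolynomialDivisibility

variable {R : Type*} [CommRing R]

theorem sub_dvd_comp_sub_comp (p r₁ r₂ : R[X]) : r₁ - r₂ ∣ p.comp r₁ - p.comp r₂ := by
  simpa only [comp, eval₂_eq_eval_map] using sub_dvd_eval_sub r₁ r₂ (p.map C)

theorem pow_dvd_comp_sub_comp {p q r s : R[X]} {a : R} {n : ℕ} (h : (X - C a) ^ n ∣ p - q)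
    (hr : s ∣ r - C a) : s ^ n ∣ p.comp r - q.comp r := by
  have h' := map_dvd (compRingHom r) h
  simp only [coe_compRingHom, sub_comp, pow_comp, X_comp, C_comp] at h'
  exact (pow_dvd_pow_of_dvd hr n).trans h'

theorem dvd_comp_of_X_dvd {p : R[X]} (h : X ∣ p) (r : R[X]) : r ∣ p.comp r := by
  simpa using map_dvd (compRingHom r) h

variable {K : Type*} [Field K]

theorem X_sub_C_dvd_inv_mul_X_sub_one {e : K} (he : e ≠ 0) : X - C e ∣ C e⁻¹ * X - 1 :=
  Dvd.intro_left (C e⁻¹) (by rw [mul_sub, ← C_mul, inv_mul_cancel₀ he, C_1])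

theorem exists_X_sub_C_pow_dvd_sub {ι : Type*} [Finite ι] {v : ι → K}
    (hv : Function.Injective v) (n : ℕ) (Q : ι → K[X]) :
    ∃ P : K[X], ∀ i, (X - C (v i)) ^ n ∣ P - Q i := by
  obtain ⟨P, hP⟩ := Ideal.exists_forall_sub_mem_ideal
    (I := fun i => Ideal.span {(X - C (v i)) ^ n})
    (fun i j hij => (Ideal.isCoprime_span_singleton_iff _ _).mpr
      (isCoprime_X_sub_C_of_isUnit_sub (sub_ne_zero.mpr (hv.ne hij)).isUnit).pow) Q
  exact ⟨P, fun i => Ideal.mem_span_singleton.mp (hP i)⟩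

-- Uniqueness of the formal solution of `U G' + V G = 0`, `G(0) = 0`, in truncated form.
variable [CharZero K] in
theorem X_pow_succ_dvd_of_dvd_mul_derivative_add {G U V : K[X]} {m : ℕ} (hU : U.coeff 0 ≠ 0)
    (hG : G.eval 0 = 0) (h : X ^ m ∣ U * derivative G + V * G) : X ^ (m + 1) ∣ G := by
  induction m with
  | zero => simpa [X_dvd_iff, coeff_zero_eq_eval_zero] using hG
  | succ m ih =>
    obtain ⟨H, rfl⟩ := ih ((pow_dvd_pow X m.le_succ).trans h)
    have hsplit : U * derivative (X ^ (m + 1) * H) + V * (X ^ (m + 1) * H) =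
        X ^ m * (C ((m + 1 : ℕ) : K) * U * H + X * (U * derivative H + V * H)) := by
      simp only [derivative_mul, derivative_X_pow, C_eq_natCast]
      push_cast
      ring
    rw [hsplit, pow_succ, mul_dvd_mul_iff_left (pow_ne_zero _ X_ne_zero),
      dvd_add_left (dvd_mul_right _ _), X_dvd_iff] at h
    have hH : H.coeff 0 = 0 := by
      simpa [mul_coeff_zero, hU, Nat.cast_add_one_ne_zero] using h
    rw [pow_succ X (m + 1)]
    exact mul_dvd_mul_left _ (X_dvd_iff.mpr hH)

end PolynomialDivisibility

section TruncatedSeries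

variable (K : Type*) [Field K]

def expTrunc (n : ℕ) : K[X] := ∑ k ∈ Finset.range n, C (k.factorial : K)⁻¹ * X ^ k

/-- The `k = 0` summand vanishes because `(-1) / 0 = 0` in a field. -/
def logTrunc (n : ℕ) : K[X] := ∑ k ∈ Finset.range n, C ((-1) ^ (k + 1) / k : K) * X ^ k

variable {K}

theorem expTrunc_succ (m : ℕ) :
    expTrunc K (m + 1) = expTrunc K m + C (m.factorial : K)⁻¹ * X ^ m :=
  Finset.sum_range_succ _ _

theorem eval_zero_expTrunc_succ (m : ℕ) : (expTrunc K (m + 1)).eval 0 = 1 := by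
  simp [expTrunc, eval_finsetSum, Finset.sum_range_succ']

theorem eval_zero_logTrunc (n : ℕ) : (logTrunc K n).eval 0 = 0 := by
  simp only [logTrunc, eval_finsetSum, eval_mul, eval_C, eval_X_pow]
  exact Finset.sum_eq_zero fun k _ => by rcases k with _ | k <;> simp

variable [CharZero K]

theorem derivative_expTrunc_succ (m : ℕ) : derivative (expTrunc K (m + 1)) = expTrunc K m := by
  rw [expTrunc, map_sum, Finset.sum_range_succ', expTrunc]
  simp only [derivative_C_mul_X_pow, Nat.add_sub_cancel, Nat.cast_zero, mul_zero, map_zero,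
    zero_mul, add_zero]
  refine Finset.sum_congr rfl fun k _ => ?_
  rw [Nat.factorial_succ]
  push_cast
  field_simp

theorem one_add_X_mul_derivative_logTrunc_succ (m : ℕ) :
    (1 + X) * derivative (logTrunc K (m + 1)) = 1 - (-X) ^ m := by
  have hderiv : derivative (logTrunc K (m + 1)) = ∑ k ∈ Finset.range m, (-X) ^ k := by
    rw [logTrunc, map_sum, Finset.sum_range_succ']
    simp only [derivative_C_mul_X_pow, Nat.add_sub_cancel, Nat.cast_zero, mul_zero, map_zero,
      zero_mul, add_zero]
    refine Finset.sum_congr rfl fun k _ => ?_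
    rw [neg_pow (X : K[X]) k, ← C_1, ← C_neg, ← C_pow]
    congr 2
    push_cast
    field_simp
    ring
  rw [hderiv, show (1 + X : K[X]) = -(-X - 1) by ring, neg_mul, mul_comm, geom_sum_mul]
  ring

-- `G = exp ∘ log - (1 + X)` solves `(1 + X) G' = G` up to the truncation error, since
-- `exp' = exp` and `(1 + X) log' = 1`.
theorem X_pow_dvd_expTrunc_comp_logTrunc_sub (n : ℕ) :
    X ^ n ∣ (expTrunc K n).comp (logTrunc K n) - (1 + X) := by
  rcases n with _ | m
  · simp
  set L := logTrunc K (m + 1)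
  set c := C (m.factorial : K)⁻¹
  have hXL : X ∣ L := by rw [X_dvd_iff, coeff_zero_eq_eval_zero, eval_zero_logTrunc]
  have hEm : (expTrunc K m).comp L = (expTrunc K (m + 1)).comp L - c * L ^ m := by
    rw [expTrunc_succ, add_comp, mul_comp, C_comp, X_pow_comp]
    ring
  apply X_pow_succ_dvd_of_dvd_mul_derivative_add (U := 1 + X) (V := -1) (by simp)
  · simp [eval_comp, L, eval_zero_logTrunc, eval_zero_expTrunc_succ]
  · have hrw : (1 + X) * derivative ((expTrunc K (m + 1)).comp L - (1 + X)) +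
        -1 * ((expTrunc K (m + 1)).comp L - (1 + X)) =
        -((-X) ^ m * (expTrunc K (m + 1)).comp L) - c * L ^ m * (1 - (-X) ^ m) := by
      rw [derivative_sub, derivative_comp, derivative_expTrunc_succ, derivative_add,
        derivative_one, derivative_X, hEm]
      linear_combination ((expTrunc K (m + 1)).comp L - c * L ^ m) *
        one_add_X_mul_derivative_logTrunc_succ (K := K) m
    rw [hrw, neg_pow]
    exact dvd_sub (dvd_neg.mpr (dvd_mul_of_dvd_left (dvd_mul_left _ _) _))
      (dvd_mul_of_dvd_left (dvd_mul_of_dvd_right (pow_dvd_pow_of_dvd hXL m) _) _)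

-- `(log ∘ (exp - 1))' = exp · log' ∘ (exp - 1) = 1` up to the truncation error.
theorem X_pow_dvd_logTrunc_comp_expTrunc_sub (n : ℕ) :
    X ^ n ∣ (logTrunc K n).comp (expTrunc K n - 1) - X := by
  rcases n with _ | m
  · simp
  set E := expTrunc K (m + 1)
  set L' := (derivative (logTrunc K (m + 1))).comp (E - 1)
  have hXE : X ∣ E - 1 := by
    rw [X_dvd_iff, coeff_zero_eq_eval_zero, eval_sub, eval_zero_expTrunc_succ, eval_one, sub_self]
  have hgeom : E * L' = 1 - (-(E - 1)) ^ m := by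
    have h := congrArg (fun p : K[X] => p.comp (E - 1)) (one_add_X_mul_derivative_logTrunc_succ m)
    simp only [mul_comp, add_comp, one_comp, X_comp, sub_comp, pow_comp, neg_comp,
      add_sub_cancel] at h
    exact h
  apply X_pow_succ_dvd_of_dvd_mul_derivative_add (U := 1) (V := 0) (by simp)
  · simp [eval_comp, E, eval_zero_logTrunc, eval_zero_expTrunc_succ]
  · have hrw : 1 * derivative ((logTrunc K (m + 1)).comp (E - 1) - X) +
        0 * ((logTrunc K (m + 1)).comp (E - 1) - X) =
        -(-(E - 1)) ^ m - C (m.factorial : K)⁻¹ * X ^ m * L' := by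
      rw [derivative_sub, derivative_comp, derivative_sub, derivative_one, sub_zero,
        derivative_expTrunc_succ, derivative_X,
        show expTrunc K m = E - C (m.factorial : K)⁻¹ * X ^ m by
          rw [eq_sub_iff_add_eq, ← expTrunc_succ]]
      linear_combination hgeom
    rw [hrw]
    exact dvd_sub (dvd_neg.mpr (pow_dvd_pow_of_dvd (dvd_neg.mpr hXE) m))
      (dvd_mul_of_dvd_left (dvd_mul_left _ _) _)

end TruncatedSeries

section Sigma1

theorem twoPiI_ne_zero : twoPiI ≠ 0 := by
  simp [twoPiI, Real.pi_ne_zero, I_ne_zero]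

theorem mem_Sigma1_iff {a : ℂ} :
    a ∈ Sigma1 ↔ 0 ≤ a.re ∧ a.re ≤ 1 ∧ (a.re = 0 → 0 ≤ a.im) ∧ (a.re = 1 → a.im < 0) := by
  simp only [Sigma1, SigmaSet, Set.mem_ofPred_eq, sub_re, sub_im, one_re, one_im, sub_zero,
    sub_nonpos, sub_eq_zero, neg_le_sub_iff_le_add, sub_eq_neg_self]
  grind

theorem eq_zero_of_mem_Sigma1_of_add_intCast_mem {a : ℂ} {k : ℤ} (ha : a ∈ Sigma1)
    (hak : a + k ∈ Sigma1) : k = 0 := by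
  rw [mem_Sigma1_iff] at ha hak
  simp only [add_re, intCast_re, add_im, intCast_im, add_zero] at hak
  have hk₁ : k ≤ 1 := by exact_mod_cast (show (k : ℝ) ≤ 1 by linarith)
  have hk₂ : -1 ≤ k := by exact_mod_cast (show (-1 : ℝ) ≤ k by linarith)
  interval_cases k <;> push_cast at hak
  · linarith [hak.2.2.1 (by linarith), ha.2.2.2 (by linarith)]
  · rfl
  · linarith [ha.2.2.1 (by linarith), hak.2.2.2 (by linarith)]

theorem exists_add_intCast_mem_Sigma1 (a : ℂ) : ∃ k : ℤ, a + k ∈ Sigma1 := by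
  have hfract : a.re + (-⌊a.re⌋ : ℤ) = Int.fract a.re := by
    push_cast; rw [Int.fract]; ring
  by_cases h : Int.fract a.re = 0 ∧ a.im < 0
  · refine ⟨-⌊a.re⌋ + 1, mem_Sigma1_iff.mpr ?_⟩
    simp only [add_re, add_im, intCast_re, intCast_im, Int.cast_add, Int.cast_one]
    rw [← add_assoc, hfract, h.1]
    norm_num [h.2]
  · refine ⟨-⌊a.re⌋, mem_Sigma1_iff.mpr ?_⟩
    simp only [add_re, add_im, intCast_re, intCast_im, add_zero, hfract]
    have := Int.fract_lt_one a.re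
    exact ⟨Int.fract_nonneg _, this.le, fun h0 => le_of_not_gt fun him => h ⟨h0, him⟩,
      fun h1 => absurd h1 this.ne⟩

theorem injOn_cexp_twoPiI_mul_Sigma1 : Set.InjOn (fun c => cexp (twoPiI * c)) Sigma1 := by
  intro a ha b hb hab
  obtain ⟨k, hk⟩ := exp_eq_exp_iff_exists_int.mp hab
  have hak : a = b + k := mul_left_cancel₀ twoPiI_ne_zero (by rw [hk, twoPiI]; ring)
  have hk0 : k = 0 := eq_zero_of_mem_Sigma1_of_add_intCast_mem hb (by rwa [← hak])
  rw [hak, hk0, Int.cast_zero, add_zero]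

theorem exists_mem_Sigma1_cexp_twoPiI_mul_eq {l : ℂ} (hl : l ≠ 0) :
    ∃ c ∈ Sigma1, cexp (twoPiI * c) = l := by
  obtain ⟨k, hk⟩ := exists_add_intCast_mem_Sigma1 (log l / twoPiI)
  refine ⟨_, hk, ?_⟩
  rw [mul_add, mul_div_cancel₀ _ twoPiI_ne_zero, exp_add, exp_log hl, twoPiI, mul_comm _ (k : ℂ),
    exp_int_mul_two_pi_mul_I, mul_one]

end Sigma1

section LogPolynomials

-- The Taylor polynomial of `z ↦ exp (2πi z)` at `c`, of degree `< n`.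
def expPoly (c : ℂ) (n : ℕ) : ℂ[X] :=
  C (cexp (twoPiI * c)) * (expTrunc ℂ n).comp (C twoPiI * (X - C c))

-- The Taylor polynomial, of degree `< n`, at `exp (2πi c)` of the branch of `(2πi)⁻¹ log` that
-- takes the value `c` there.
def logPoly (c : ℂ) (n : ℕ) : ℂ[X] :=
  C c + C twoPiI⁻¹ * (logTrunc ℂ n).comp (C (cexp (twoPiI * c))⁻¹ * X - 1)

theorem X_sub_C_dvd_logPoly_sub_C (c : ℂ) (n : ℕ) :
    X - C (cexp (twoPiI * c)) ∣ logPoly c n - C c := by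
  have hX : X ∣ logTrunc ℂ n := by
    rw [X_dvd_iff, coeff_zero_eq_eval_zero, eval_zero_logTrunc]
  rw [logPoly, add_sub_cancel_left]
  exact dvd_mul_of_dvd_right
    ((X_sub_C_dvd_inv_mul_X_sub_one (exp_ne_zero _)).trans (dvd_comp_of_X_dvd hX _)) _

theorem X_sub_C_dvd_expPoly_sub_C (c : ℂ) {n : ℕ} (hn : 0 < n) :
    X - C c ∣ expPoly c n - C (cexp (twoPiI * c)) := by
  obtain ⟨m, rfl⟩ : ∃ m, n = m + 1 := ⟨n - 1, by omega⟩
  have hX : X ∣ expTrunc ℂ (m + 1) - 1 := by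
    rw [X_dvd_iff, coeff_zero_eq_eval_zero, eval_sub, eval_zero_expTrunc_succ, eval_one, sub_self]
  have h := dvd_comp_of_X_dvd hX (C twoPiI * (X - C c))
  rw [sub_comp, one_comp] at h
  rw [expPoly, ← mul_sub_one]
  exact dvd_mul_of_dvd_right ((dvd_mul_left _ _).trans h) _

theorem X_sub_C_pow_dvd_expPoly_comp_logPoly_sub_X (c : ℂ) (n : ℕ) :
    (X - C (cexp (twoPiI * c))) ^ n ∣ (expPoly c n).comp (logPoly c n) - X := by
  set e := cexp (twoPiI * c)
  set Y := C e⁻¹ * X - 1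
  have h := pow_dvd_comp_sub_comp (r := Y) (s := X - C e) (a := 0)
    (by simpa using X_pow_dvd_expTrunc_comp_logTrunc_sub (K := ℂ) n)
    (by rw [C_0, sub_zero]; exact X_sub_C_dvd_inv_mul_X_sub_one (exp_ne_zero _))
  have hτ : (C twoPiI * (X - C c)).comp (logPoly c n) = (logTrunc ℂ n).comp Y := by
    rw [mul_comp, C_comp, sub_comp, X_comp, C_comp, logPoly, add_sub_cancel_left, ← mul_assoc,
      ← C_mul, mul_inv_cancel₀ twoPiI_ne_zero, C_1, one_mul]
  have he : C e * (1 + Y) = X := by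
    rw [add_sub_cancel, ← mul_assoc, ← C_mul, mul_inv_cancel₀ (exp_ne_zero _), C_1, one_mul]
  have heq : (expPoly c n).comp (logPoly c n) - X =
      C e * (((expTrunc ℂ n).comp (logTrunc ℂ n)).comp Y - (1 + X).comp Y) := by
    rw [expPoly, mul_comp, C_comp, comp_assoc, hτ, ← comp_assoc, add_comp, one_comp, X_comp,
      mul_sub, he]
  rw [heq]
  exact dvd_mul_of_dvd_right h _

theorem X_sub_C_pow_dvd_logPoly_comp_expPoly_sub_X (c : ℂ) (n : ℕ) :
    (X - C c) ^ n ∣ (logPoly c n).comp (expPoly c n) - X := by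
  set Z := C twoPiI * (X - C c)
  have h := pow_dvd_comp_sub_comp (r := Z) (s := X - C c) (a := 0)
    (by simpa using X_pow_dvd_logTrunc_comp_expTrunc_sub (K := ℂ) n)
    (by rw [C_0, sub_zero]; exact dvd_mul_left _ _)
  have he : (C (cexp (twoPiI * c))⁻¹ * X - 1).comp (expPoly c n) = (expTrunc ℂ n - 1).comp Z := by
    rw [sub_comp, mul_comp, C_comp, X_comp, one_comp, expPoly, ← mul_assoc, ← C_mul,
      inv_mul_cancel₀ (exp_ne_zero _), C_1, one_mul, sub_comp, one_comp]
  have hZ : C c + C twoPiI⁻¹ * Z - X = 0 := by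
    rw [← mul_assoc, ← C_mul, inv_mul_cancel₀ twoPiI_ne_zero, C_1, one_mul, add_sub_cancel,
      sub_self]
  have heq : (logPoly c n).comp (expPoly c n) - X =
      C twoPiI⁻¹ * (((logTrunc ℂ n).comp (expTrunc ℂ n - 1)).comp Z - X.comp Z) := by
    rw [logPoly, add_comp, C_comp, mul_comp, C_comp, comp_assoc, he, ← comp_assoc, X_comp]
    linear_combination hZ
  rw [heq]
  exact dvd_mul_of_dvd_right h _

theorem X_sub_C_dvd_sub_C_of_pow_dvd_sub_logPoly {P : ℂ[X]} {c : ℂ} {n : ℕ} (hn : 0 < n)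
    (h : (X - C (cexp (twoPiI * c))) ^ n ∣ P - logPoly c n) : X - C (cexp (twoPiI * c)) ∣ P - C c :=
  sub_add_sub_cancel P (logPoly c n) (C c) ▸
    dvd_add ((dvd_pow_self _ hn.ne').trans h) (X_sub_C_dvd_logPoly_sub_C c n)

end LogPolynomials

section Operators

variable {E : Type*} [NormedAddCommGroup E] [NormedSpace ℂ E]

theorem aeval_apply_eq_of_eqOn {u w : E →L[ℂ] E} {S : Set E} (hu : Set.MapsTo u S S)
    (huw : Set.EqOn u w S) (p : ℂ[X]) {x : E} (hx : x ∈ S) : aeval u p x = aeval w p x := by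
  have hpow : ∀ k, ∀ y ∈ S, (u ^ k) y = (w ^ k) y := by
    intro k
    induction k with
    | zero => simp
    | succ k ih =>
      intro y hy
      rw [pow_succ, pow_succ, mul_apply_eq_comp, mul_apply_eq_comp, ih _ (hu hy), huw hy]
  simp only [aeval_eq_sum_range, sum_apply, smul_apply, hpow _ x hx]

theorem exp_apply_eq_aeval_expTrunc [CompleteSpace E] {b : E →L[ℂ] E} {x : E} {m : ℕ}
    (h : (b ^ m) x = 0) : NormedSpace.exp b x = aeval b (expTrunc ℂ m) x := by
  have hsum := (NormedSpace.exp_series_hasSum_exp' (𝕂 := ℂ) b).mapL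
    (ContinuousLinearMap.apply ℂ E x)
  refine hsum.unique (hasSum_sum_of_ne_finset_zero (s := Finset.range m) fun k hk => ?_)
    |>.trans ?_
  · rw [Finset.mem_range, not_lt] at hk
    rw [ContinuousLinearMap.apply_apply, smul_apply, ← Nat.sub_add_cancel hk,
      pow_add, mul_apply_eq_comp, h, map_zero, smul_zero]
  · simp [expTrunc, Algebra.smul_def]

theorem expEnd_apply_eq_aeval_expPoly [CompleteSpace E] {g : E →L[ℂ] E} {c : ℂ} {x : E}
    {m : ℕ} (hx : aeval g ((X - C c) ^ m) x = 0) : expEnd g x = aeval g (expPoly c m) x := by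
  -- needed by `NormedSpace.exp_add_of_commute`
  let : NormedAlgebra ℚ (E →L[ℂ] E) := NormedAlgebra.restrictScalars ℚ ℂ _
  set b := aeval g (C twoPiI * (X - C c))
  have hsplit : twoPiI • g = algebraMap ℂ _ (twoPiI * c) + b := by
    simp [b, Algebra.smul_def, mul_sub]
  have hb : (b ^ m) x = 0 := by
    rw [← map_pow, mul_pow, ← C_pow, map_mul, aeval_C, mul_apply_eq_comp, hx, map_zero]
  rw [expEnd, hsplit, NormedSpace.exp_add_of_commute (Algebra.commutes _ _),
    ← NormedSpace.algebraMap_exp_comm, ← Complex.exp_eq_exp_ℂ, mul_apply_eq_comp,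
    exp_apply_eq_aeval_expTrunc hb, expPoly, map_mul, aeval_C, aeval_comp, mul_apply_eq_comp]

theorem aeval_apply_eq_of_dvd_sub {T : E →L[ℂ] E} {r : ℂ[X]} {x : E} (hx : aeval T r x = 0)
    {p q : ℂ[X]} (h : r ∣ p - q) : aeval T p x = aeval T q x := by
  obtain ⟨s, hs⟩ := h
  rw [← sub_eq_zero, ← sub_apply, ← map_sub, hs, mul_comm, map_mul, mul_apply_eq_comp, hx,
    map_zero]

theorem cexp_twoPiI_mul_mem_spectrum_expEnd [CompleteSpace E] {g : E →L[ℂ] E} {c : ℂ}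
    (hc : c ∈ spectrum ℂ g) : cexp (twoPiI * c) ∈ spectrum ℂ (expEnd g) := by
  rw [Complex.exp_eq_exp_ℂ]
  exact spectrum.exp_mem_exp (twoPiI • g)
    ((spectrum.smul_mem_smul_iff (r := Units.mk0 twoPiI twoPiI_ne_zero)).mpr hc)

end Operators

section FiniteDimensional

variable {E : Type*} [NormedAddCommGroup E] [NormedSpace ℂ E] [FiniteDimensional ℂ E]

theorem finrank_pos_of_mem_spectrum {T : E →L[ℂ] E} {μ : ℂ} (h : μ ∈ spectrum ℂ T) :
    0 < finrank ℂ E := by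
  rw [Module.finrank_pos_iff]
  by_contra hE
  rw [not_nontrivial_iff_subsingleton] at hE
  simp [spectrum.of_subsingleton] at h

theorem ContinuousLinearMap.coe_aeval (T : E →L[ℂ] E) (p : ℂ[X]) :
    ((aeval T p : E →L[ℂ] E) : Module.End ℂ E) = aeval (T : Module.End ℂ E) p :=
  (aeval_algHom_apply (Module.End.toContinuousLinearMap E).symm T p).symm

theorem mem_maxGenEigenspace_iff_aeval_apply_eq_zero {T : E →L[ℂ] E} {μ : ℂ} {x : E} :
    x ∈ Module.End.maxGenEigenspace (T : Module.End ℂ E) μ ↔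
      aeval T ((X - C μ) ^ finrank ℂ E) x = 0 := by
  rw [Module.End.maxGenEigenspace_eq_genEigenspace_finrank, Module.End.mem_genEigenspace_nat,
    LinearMap.mem_ker, ← ContinuousLinearMap.coe_coe, ContinuousLinearMap.coe_aeval]
  simp [Algebra.algebraMap_eq_smul_one]

theorem ext_of_forall_aeval_X_sub_C_pow_apply_eq_zero (T : E →L[ℂ] E) {u w : E →L[ℂ] E}
    (h : ∀ μ ∈ spectrum ℂ T, ∀ x, aeval T ((X - C μ) ^ finrank ℂ E) x = 0 → u x = w x) :
    u = w := by
  suffices ⊤ ≤ LinearMap.ker ((u - w : E →L[ℂ] E) : Module.End ℂ E) by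
    ext x
    simpa [sub_eq_zero] using this (Submodule.mem_top (x := x))
  rw [← Module.End.iSup_maxGenEigenspace_eq_top (T : Module.End ℂ E), iSup_le_iff]
  intro μ
  by_cases hμ : μ ∈ spectrum ℂ T
  · intro x hx
    simpa [sub_eq_zero] using h μ hμ x (mem_maxGenEigenspace_iff_aeval_apply_eq_zero.mp hx)
  · have hbot : Module.End.maxGenEigenspace (T : Module.End ℂ E) μ = ⊥ := by
      by_contra hne
      rw [ContinuousLinearMap.spectrum_eq, ← Module.End.hasUnifEigenvalue_iff_mem_spectrum] at hμ
      exact hμ (Module.End.HasUnifEigenvalue.lt zero_lt_one hne)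
    simp [hbot]

end FiniteDimensional

section Sigma1Log

variable {E : Type*} [NormedAddCommGroup E] [NormedSpace ℂ E] [FiniteDimensional ℂ E]

def IsSigma1LogInterpolant (f : E →L[ℂ] E) (P : ℂ[X]) : Prop :=
  ∀ l ∈ spectrum ℂ f, ∃ c ∈ Sigma1, cexp (twoPiI * c) = l ∧
    (X - C l) ^ finrank ℂ E ∣ P - logPoly c (finrank ℂ E)

theorem exists_isSigma1LogInterpolant {f : E →L[ℂ] E} (hf : IsUnit f) :
    ∃ P, IsSigma1LogInterpolant f P := by
  have hfin : (spectrum ℂ f).Finite := by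
    rw [ContinuousLinearMap.spectrum_eq]
    exact Module.End.finite_spectrum _
  have : Finite (spectrum ℂ f) := hfin.to_subtype
  have hne : ∀ l ∈ spectrum ℂ f, l ≠ 0 := fun l hl h0 => (spectrum.zero_mem_iff ℂ).mp (h0 ▸ hl) hf
  choose c hc using fun l : spectrum ℂ f => exists_mem_Sigma1_cexp_twoPiI_mul_eq (hne l l.2)
  obtain ⟨P, hP⟩ := exists_X_sub_C_pow_dvd_sub Subtype.val_injective (finrank ℂ E)
    fun l => logPoly (c l) (finrank ℂ E)
  exact ⟨P, fun l hl => ⟨c ⟨l, hl⟩, (hc _).1, (hc _).2, hP ⟨l, hl⟩⟩⟩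

namespace IsSigma1LogInterpolant

variable {f : E →L[ℂ] E} {P : ℂ[X]}

theorem spectrum_aeval_subset (hP : IsSigma1LogInterpolant f P) :
    spectrum ℂ (aeval f P) ⊆ Sigma1 := by
  intro z hz
  have : Nontrivial (E →L[ℂ] E) := by
    by_contra h
    rw [not_nontrivial_iff_subsingleton] at h
    simp [spectrum.of_subsingleton] at hz
  obtain ⟨l, hl, rfl⟩ := (spectrum.map_polynomial_aeval f P).subset hz
  obtain ⟨c, hc, rfl, hPc⟩ := hP l hl
  have hroot := X_sub_C_dvd_sub_C_of_pow_dvd_sub_logPoly (finrank_pos_of_mem_spectrum hl) hPc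
  rw [dvd_iff_isRoot, IsRoot, eval_sub, eval_C, sub_eq_zero] at hroot
  simpa [hroot] using hc

theorem expEnd_aeval (hP : IsSigma1LogInterpolant f P) : expEnd (aeval f P) = f := by
  refine ext_of_forall_aeval_X_sub_C_pow_apply_eq_zero f fun l hl x hx => ?_
  obtain ⟨c, -, rfl, hPc⟩ := hP l hl
  have hroot := X_sub_C_dvd_sub_C_of_pow_dvd_sub_logPoly (finrank_pos_of_mem_spectrum hl) hPc
  rw [expEnd_apply_eq_aeval_expPoly (c := c) (m := finrank ℂ E), ← aeval_comp]
  · calc aeval f ((expPoly c _).comp P) x = aeval f X x :=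
          aeval_apply_eq_of_dvd_sub hx (sub_add_sub_cancel _ ((expPoly c _).comp (logPoly c _)) X ▸
            dvd_add (hPc.trans (sub_dvd_comp_sub_comp _ _ _))
              (X_sub_C_pow_dvd_expPoly_comp_logPoly_sub_X c _))
      _ = f x := by rw [aeval_X]
  · rw [← aeval_comp, pow_comp, sub_comp, X_comp, C_comp,
      aeval_apply_eq_of_dvd_sub hx (q := 0) (by rw [sub_zero]; exact pow_dvd_pow_of_dvd hroot _),
      map_zero, zero_apply]

theorem eq_aeval_of_expEnd_eq (hP : IsSigma1LogInterpolant f P) {g : E →L[ℂ] E}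
    (hg : spectrum ℂ g ⊆ Sigma1) (hexp : expEnd g = f) : g = aeval f P := by
  refine ext_of_forall_aeval_X_sub_C_pow_apply_eq_zero g fun c hc x hx => ?_
  obtain ⟨c', hc', hcc', hPc⟩ := hP _ (hexp ▸ cexp_twoPiI_mul_mem_spectrum_expEnd hc)
  obtain rfl : c' = c := injOn_cexp_twoPiI_mul_Sigma1 hc' (hg hc) hcc'
  set F := expPoly c' (finrank ℂ E)
  set S := {y | aeval g ((X - C c') ^ finrank ℂ E) y = 0}
  have hmaps : Set.MapsTo (aeval g F) S S := fun y hy => by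
    simp only [S, Set.mem_ofPred_eq] at hy ⊢
    rw [← mul_apply_eq_comp, ← map_mul, mul_comm, map_mul, mul_apply_eq_comp, hy, map_zero]
  have heqOn : Set.EqOn (aeval g F) f S := fun y hy => by
    rw [← hexp, expEnd_apply_eq_aeval_expPoly hy]
  calc g x = aeval g ((logPoly c' (finrank ℂ E)).comp F) x := by
        rw [aeval_apply_eq_of_dvd_sub hx (X_sub_C_pow_dvd_logPoly_comp_expPoly_sub_X c' _), aeval_X]
    _ = aeval g (P.comp F) x := aeval_apply_eq_of_dvd_sub hx (pow_dvd_comp_sub_comp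
          (dvd_sub_comm.mp hPc) (X_sub_C_dvd_expPoly_sub_C c' (finrank_pos_of_mem_spectrum hc)))
    _ = aeval (aeval g F) P x := by rw [aeval_comp]
    _ = aeval f P x := aeval_apply_eq_of_eqOn hmaps heqOn P hx

end IsSigma1LogInterpolant

end Sigma1Log

/-- Proposition: for an invertible endomorphism `f` of a finite-dimensional complex vector
space there is a unique endomorphism `g` with spectrum in Σ₁ such that `exp(2πi·g) = f`. -/
theorem unique_log_with_spectrum_in_Sigma1
    {E : Type*} [NormedAddCommGroup E] [NormedSpace ℂ E] [FiniteDimensional ℂ E]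
    (f : E →L[ℂ] E) (hf : IsUnit f) :
    ∃! g : E →L[ℂ] E, spectrum ℂ g ⊆ Sigma1 ∧ expEnd g = f := by
  obtain ⟨P, hP⟩ := exists_isSigma1LogInterpolant hf
  exact ⟨aeval f P, ⟨hP.spectrum_aeval_subset, hP.expEnd_aeval⟩,
    fun g ⟨hg, hexp⟩ => hP.eq_aeval_of_expEnd_eq hg hexp⟩
end
end

section
/- Let V, W be finite-dimensional complex vector spaces and let u : V → W and c : W → V be linear maps. Set y := ψ(c ∘ u) ∘ c. Then y = c ∘ ψ(u ∘ c), and y ∘ u + Id_V = exp(2πi·(c ∘ u)) and u ∘ y + Id_W = exp(2πi·(u ∘ c)); in particular both y ∘ u + Id_V and u ∘ y + Id_W are invertible. -/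
open Complex

noncomputable section

/-- The power series `ψ(A) := ∑_{k=1}^∞ ((2πi)^k / k!) A^(k-1)`. It satisfies
`A·ψ(A) = ψ(A)·A = exp(2πi·A) − Id`. -/
def psiEnd {E : Type*} [NormedAddCommGroup E] [NormedSpace ℂ E] (A : E →L[ℂ] E) :
    E →L[ℂ] E :=
  ∑' k : ℕ, ((twoPiI ^ (k + 1) / (Nat.factorial (k + 1) : ℂ)) • A ^ k)

/-!
With `t = 2πi`, `ψ(a) = ∑ t^(k+1)/(k+1)! • a^k` is the exponential series of `t • a` with its
constant term removed and one factor `a` stripped off, so `ψ(a) a + 1 = a ψ(a) + 1 = exp(t • a)`.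
The push-through identity `(c u)^k c = c (u c)^k` passes termwise to the series, giving
`ψ(c u) c = c ψ(u c)`. Hence `y u = ψ(c u) (c u)` and `u y = (u c) ψ(u c)`, and both
`y u + 1`, `u y + 1` are exponentials, which are units.
-/

open NormedSpace
open scoped Nat

section BanachAlgebra

variable {𝕂 𝔸 : Type*} [RCLike 𝕂] [NormedRing 𝔸] [NormedAlgebra 𝕂 𝔸] [CompleteSpace 𝔸]

lemma summable_pow_succ_div_factorial_smul_pow (t : 𝕂) (a : 𝔸) :
    Summable fun k : ℕ => (t ^ (k + 1) / (k + 1)! : 𝕂) • a ^ k := by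
  refine Summable.of_norm_bounded_eventually_nat
    ((Real.summable_pow_div_factorial (‖t‖ * ‖a‖)).mul_left ‖t‖) ?_
  filter_upwards [Filter.eventually_gt_atTop 0] with k hk
  calc ‖(t ^ (k + 1) / (k + 1)! : 𝕂) • a ^ k‖
      ≤ ‖t‖ ^ (k + 1) / (k + 1)! * ‖a‖ ^ k := by
        grw [norm_smul_le, norm_pow_le' a hk]
        simp only [norm_div, norm_pow, RCLike.norm_natCast, le_refl]
    _ ≤ ‖t‖ ^ (k + 1) / k ! * ‖a‖ ^ k := by
        gcongr
        exact k.le_succ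
    _ = ‖t‖ * ((‖t‖ * ‖a‖) ^ k / k !) := by ring

lemma hasSum_pow_succ_div_factorial_smul_pow_succ (t : 𝕂) (a : 𝔸) :
    HasSum (fun k : ℕ => (t ^ (k + 1) / (k + 1)! : 𝕂) • a ^ (k + 1)) (exp (t • a) - 1) := by
  have hexp := (hasSum_nat_add_iff' 1).mpr (exp_series_hasSum_exp' (𝕂 := 𝕂) (t • a))
  simpa only [Finset.sum_range_one, Nat.factorial_zero, Nat.cast_one, inv_one, pow_zero, mul_one,
    one_smul, smul_pow, smul_smul, div_eq_inv_mul] using hexp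

lemma tsum_pow_succ_div_factorial_smul_pow_mul_add_one (t : 𝕂) (a : 𝔸) :
    (∑' k : ℕ, (t ^ (k + 1) / (k + 1)! : 𝕂) • a ^ k) * a + 1 = exp (t • a) := by
  have hsum := (summable_pow_succ_div_factorial_smul_pow t a).hasSum.mul_right a
  simp only [smul_mul_assoc, ← pow_succ] at hsum
  rw [hsum.unique (hasSum_pow_succ_div_factorial_smul_pow_succ t a), sub_add_cancel]

lemma mul_tsum_pow_succ_div_factorial_smul_pow_add_one (t : 𝕂) (a : 𝔸) :
    a * (∑' k : ℕ, (t ^ (k + 1) / (k + 1)! : 𝕂) • a ^ k) + 1 = exp (t • a) := by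
  have hsum := (summable_pow_succ_div_factorial_smul_pow t a).hasSum.mul_left a
  simp only [mul_smul_comm, ← pow_succ'] at hsum
  rw [hsum.unique (hasSum_pow_succ_div_factorial_smul_pow_succ t a), sub_add_cancel]

end BanachAlgebra

section Psi

variable {E : Type*} [NormedAddCommGroup E] [NormedSpace ℂ E] [CompleteSpace E]

lemma psiEnd_mul_add_one (A : E →L[ℂ] E) : psiEnd A * A + 1 = expEnd A :=
  tsum_pow_succ_div_factorial_smul_pow_mul_add_one twoPiI A

lemma mul_psiEnd_add_one (A : E →L[ℂ] E) : A * psiEnd A + 1 = expEnd A :=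
  mul_tsum_pow_succ_div_factorial_smul_pow_add_one twoPiI A

lemma isUnit_expEnd (A : E →L[ℂ] E) : IsUnit (expEnd A) :=
  isUnit_exp_of_mem_ball (𝕂 := ℂ) <|
    (expSeries_radius_eq_top ℂ (E →L[ℂ] E)).symm ▸ edist_lt_top _ _

end Psi

section Intertwining

variable {𝕜 V W : Type*} [NontriviallyNormedField 𝕜] [NormedAddCommGroup V] [NormedSpace 𝕜 V]
  [NormedAddCommGroup W] [NormedSpace 𝕜 W]

open ContinuousLinearMap

lemma pow_comp_comp_eq_comp_pow_comp (u : V →L[𝕜] W) (c : W →L[𝕜] V) (k : ℕ) :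
    ((c.comp u) ^ k).comp c = c.comp ((u.comp c) ^ k) := by
  induction k with
  | zero => rfl
  | succ k ih =>
    simp only [pow_succ, mul_def, comp_assoc]
    rw [← comp_assoc _ c, ih, comp_assoc]

lemma tsum_smul_pow_comp_comp_eq (p : ℕ → 𝕜) (u : V →L[𝕜] W) (c : W →L[𝕜] V)
    (hV : Summable fun k => p k • (c.comp u) ^ k) (hW : Summable fun k => p k • (u.comp c) ^ k) :
    (∑' k, p k • (c.comp u) ^ k).comp c = c.comp (∑' k, p k • (u.comp c) ^ k) := by
  calc (∑' k, p k • (c.comp u) ^ k).comp c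
      = ∑' k, (p k • (c.comp u) ^ k).comp c := ((compL 𝕜 W V V).flip c).map_tsum hV
    _ = ∑' k, c.comp (p k • (u.comp c) ^ k) := tsum_congr fun k => by
        rw [smul_comp, comp_smul, pow_comp_comp_eq_comp_pow_comp]
    _ = c.comp (∑' k, p k • (u.comp c) ^ k) := (compL 𝕜 W W V c).map_tsum hW |>.symm

end Intertwining

lemma psiEnd_comp_comp_eq {V W : Type*} [NormedAddCommGroup V] [NormedSpace ℂ V] [CompleteSpace V]
    [NormedAddCommGroup W] [NormedSpace ℂ W] [CompleteSpace W] (u : V →L[ℂ] W) (c : W →L[ℂ] V) :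
    (psiEnd (c.comp u)).comp c = c.comp (psiEnd (u.comp c)) :=
  tsum_smul_pow_comp_comp_eq _ u c (summable_pow_succ_div_factorial_smul_pow _ _)
    (summable_pow_succ_div_factorial_smul_pow _ _)

/-- For `u : V → W`, `c : W → V` and `y := ψ(c∘u) ∘ c`, one has `y = c ∘ ψ(u∘c)`,
`y∘u + Id = exp(2πi·(c∘u))`, `u∘y + Id = exp(2πi·(u∘c))`; in particular both
`y∘u + Id` and `u∘y + Id` are invertible. -/
theorem psi_comp_properties
    {V W : Type*} [NormedAddCommGroup V] [NormedSpace ℂ V] [FiniteDimensional ℂ V]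
    [NormedAddCommGroup W] [NormedSpace ℂ W] [FiniteDimensional ℂ W]
    (u : V →L[ℂ] W) (c : W →L[ℂ] V) :
    (psiEnd (c.comp u)).comp c = c.comp (psiEnd (u.comp c)) ∧
    ((psiEnd (c.comp u)).comp c).comp u + ContinuousLinearMap.id ℂ V =
      expEnd (c.comp u) ∧
    u.comp ((psiEnd (c.comp u)).comp c) + ContinuousLinearMap.id ℂ W =
      expEnd (u.comp c) ∧
    IsUnit (((psiEnd (c.comp u)).comp c).comp u + ContinuousLinearMap.id ℂ V) ∧
    IsUnit (u.comp ((psiEnd (c.comp u)).comp c) + ContinuousLinearMap.id ℂ W) := by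
  have hy := psiEnd_comp_comp_eq u c
  have hV : ((psiEnd (c.comp u)).comp c).comp u + ContinuousLinearMap.id ℂ V =
      expEnd (c.comp u) :=
    psiEnd_mul_add_one (c.comp u)
  have hW : u.comp ((psiEnd (c.comp u)).comp c) + ContinuousLinearMap.id ℂ W =
      expEnd (u.comp c) := by
    rw [hy]
    exact mul_psiEnd_add_one (u.comp c)
  exact ⟨hy, hV, hW, hV ▸ isUnit_expEnd _, hW ▸ isUnit_expEnd _⟩
end
end

section
/- Let M ∈ ℕ⁺ and let A be an M × M complex matrix. Define the matrix-valued entire functions φ_A(w) := Σ_{k=0}^∞ (A^k / (k+1)!) · w^{k+1} and ψ(A) := Σ_{k=1}^∞ ((2πi)^k / k!) · A^{k−1}. Then for every w ∈ ℂ, φ_A(w + 2πi) − φ_A(w) = ψ(A) · exp(A·w). -/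
/-!
Expanding in powers of `a`, the coefficient of `a ^ n` in `φ_a(w + v) - φ_a(w)` is
`((w + v) ^ (n + 1) - w ^ (n + 1)) / (n + 1)!`. By the binomial theorem this is
`∑_{i + j = n} v ^ (i + 1) / (i + 1)! * w ^ j / j!`, the `n`-th coefficient of the Cauchy product
of the series `φ_a(v)` and `exp (w • a)`. Both converge absolutely in a complete normed algebra
over `ℝ` or `ℂ`, so `φ_a(w + v) - φ_a(w) = φ_a(v) * exp (w • a)`, and `ψ(A)` is `φ_A(2πi)`.
-/

open Complex

noncomputable section

/-- The matrix-valued entire function `φ_A(w) := ∑_{k=0}^∞ (A^k / (k+1)!) · w^(k+1)`. -/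
def phiMat {M : ℕ} (A : Matrix (Fin M) (Fin M) ℂ) (w : ℂ) : Matrix (Fin M) (Fin M) ℂ :=
  ∑' k : ℕ, ((w ^ (k + 1) / (Nat.factorial (k + 1) : ℂ)) • A ^ k)

/-- The matrix power series `ψ(A) := ∑_{k=1}^∞ ((2πi)^k / k!) A^(k-1)`. -/
def psiMat {M : ℕ} (A : Matrix (Fin M) (Fin M) ℂ) : Matrix (Fin M) (Fin M) ℂ :=
  ∑' k : ℕ, ((twoPiI ^ (k + 1) / (Nat.factorial (k + 1) : ℂ)) • A ^ k)

open Finset NormedSpace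
open scoped Nat

theorem add_pow_div_factorial {K : Type*} [Field K] [CharZero K] (x y : K) (n : ℕ) :
    (x + y) ^ n / n ! = ∑ p ∈ antidiagonal n, x ^ p.1 / p.1 ! * (y ^ p.2 / p.2 !) := by
  rw [(Commute.all x y).add_pow', sum_div]
  refine sum_congr rfl fun p hp => ?_
  rw [HasAntidiagonal.mem_antidiagonal] at hp
  rw [nsmul_eq_mul, ← hp, Nat.cast_add_choose]
  have := (p.1 + p.2).factorial_ne_zero
  field_simp

theorem add_pow_succ_sub_pow_succ_div_factorial {K : Type*} [Field K] [CharZero K]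
    (v w : K) (n : ℕ) :
    ((w + v) ^ (n + 1) - w ^ (n + 1)) / (n + 1)! =
      ∑ p ∈ antidiagonal n, v ^ (p.1 + 1) / (p.1 + 1)! * (w ^ p.2 / p.2 !) := by
  rw [sub_div, add_comm w v, add_pow_div_factorial, Nat.sum_antidiagonal_succ]
  simp

section PhiSeries

variable {𝕂 𝔸 : Type*} [RCLike 𝕂] [NormedRing 𝔸] [NormedAlgebra 𝕂 𝔸]

def phiSeries (a : 𝔸) (w : 𝕂) : 𝔸 :=
  ∑' k : ℕ, (w ^ (k + 1) / (k + 1)! : 𝕂) • a ^ k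

theorem summable_norm_phiSeries_term (a : 𝔸) (c : 𝕂) :
    Summable fun k : ℕ => ‖(c ^ (k + 1) / (k + 1)! : 𝕂) • a ^ k‖ := by
  refine ((norm_expSeries_summable' (𝕂 := 𝕂) (c • a)).mul_left ‖c‖).of_nonneg_of_le
    (fun k => norm_nonneg _) fun k => ?_
  have hterm :
      (c ^ (k + 1) / (k + 1)! : 𝕂) • a ^ k = (c / (k + 1)) • ((k !⁻¹ : 𝕂) • (c • a) ^ k) := by
    rw [smul_pow, smul_smul, smul_smul, Nat.factorial_succ]
    congr 1
    push_cast
    field_simp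
    ring
  have hcoeff : ‖c / (k + 1)‖ ≤ ‖c‖ := by
    rw [norm_div]
    refine div_le_self (norm_nonneg _) ?_
    rw [← Nat.cast_succ, RCLike.norm_natCast]
    exact_mod_cast Nat.succ_pos k
  rw [hterm]
  exact (norm_smul_le _ _).trans (mul_le_mul_of_nonneg_right hcoeff (norm_nonneg _))

variable [CompleteSpace 𝔸]

theorem phiSeries_add_sub_phiSeries (a : 𝔸) (w v : 𝕂) :
    phiSeries a (w + v) - phiSeries a w = phiSeries a v * exp (w • a) := by
  rw [exp_eq_tsum 𝕂, phiSeries, phiSeries, phiSeries,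
    tsum_mul_tsum_eq_tsum_sum_antidiagonal_of_summable_norm (summable_norm_phiSeries_term a v)
      (norm_expSeries_summable' (w • a)),
    ← (summable_norm_phiSeries_term a (w + v)).of_norm.tsum_sub
      (summable_norm_phiSeries_term a w).of_norm]
  refine tsum_congr fun n => ?_
  rw [← sub_smul, ← sub_div, add_pow_succ_sub_pow_succ_div_factorial, sum_smul]
  refine sum_congr rfl fun p hp => ?_
  rw [HasAntidiagonal.mem_antidiagonal] at hp
  rw [smul_pow, smul_smul, smul_mul_smul_comm, ← pow_add, hp]
  congr 1
  ring

end PhiSeries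

theorem phiMat_variation_general {M : ℕ} (A : Matrix (Fin M) (Fin M) ℂ) (w : ℂ) :
    phiMat A (w + twoPiI) - phiMat A w = psiMat A * NormedSpace.exp (w • A) := by
  -- Any algebra norm inducing the product topology (used by `tsum` and `exp`) will do.
  let : NormedRing (Matrix (Fin M) (Fin M) ℂ) := Matrix.linftyOpNormedRing
  let : NormedAlgebra ℂ (Matrix (Fin M) (Fin M) ℂ) := Matrix.linftyOpNormedAlgebra
  exact phiSeries_add_sub_phiSeries A w twoPiI

/-- For every square complex matrix `A` and every `w ∈ ℂ`,
`φ_A(w + 2πi) − φ_A(w) = ψ(A) · exp(A·w)`. -/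
theorem phiMat_variation {M : ℕ} (hM : 0 < M) (A : Matrix (Fin M) (Fin M) ℂ) (w : ℂ) :
    phiMat A (w + twoPiI) - phiMat A w = psiMat A * NormedSpace.exp (w • A) :=
  phiMat_variation_general A w
end
end

section
/- Let M ∈ ℕ⁺ and let A be an M × M complex matrix whose spectrum is contained in Σ₁. Then for every w ∈ ℂ, the matrix φ_A(w + 2πi) − φ_A(w) is invertible, where φ_A(w) := Σ_{k=0}^∞ (A^k / (k+1)!) · w^{k+1}. -/
open Complex

noncomputable section

/-!
If `A v = μ v`, the variation acts on `v` as the scalar `φ_μ(w + 2πi) − φ_μ(w)`, and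
`μ (φ_μ(w + 2πi) − φ_μ(w)) = e^{μw} (e^{2πiμ} − 1)`, which vanishes only when `μ` is a nonzero
integer (for `μ = 0` the variation is `2πi`); `Σ₁` contains no such integer. The variation commutes
with `A`, so if it were singular its kernel would contain an eigenvector of `A`.
-/

open scoped Nat Matrix

section Phi

variable {𝔸 : Type*}

def phi [Ring 𝔸] [Algebra ℂ 𝔸] [TopologicalSpace 𝔸] (a : 𝔸) (w : ℂ) : 𝔸 :=
  ∑' k : ℕ, (w ^ (k + 1) / ((k + 1)! : ℂ)) • a ^ k

theorem commute_phi [Ring 𝔸] [Algebra ℂ 𝔸] [TopologicalSpace 𝔸] [IsTopologicalRing 𝔸]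
    [T2Space 𝔸] (a : 𝔸) (w : ℂ) : Commute a (phi a w) :=
  Commute.tsum_right a fun k => ((Commute.refl a).pow_right k).smul_right _

theorem summable_phi [NormedRing 𝔸] [NormedAlgebra ℂ 𝔸] [CompleteSpace 𝔸] (a : 𝔸) (w : ℂ) :
    Summable fun k : ℕ => (w ^ (k + 1) / ((k + 1)! : ℂ)) • a ^ k := by
  refine .of_norm_bounded_eventually_nat
    ((Real.summable_pow_div_factorial (‖w‖ * ‖a‖)).mul_left ‖w‖) ?_
  filter_upwards [Filter.eventually_gt_atTop 0] with k hk
  have hfact : (k ! : ℝ) ≤ (k + 1)! := mod_cast Nat.factorial_le k.le_succ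
  calc ‖(w ^ (k + 1) / ((k + 1)! : ℂ)) • a ^ k‖
      ≤ ‖w‖ ^ (k + 1) / (k + 1)! * ‖a‖ ^ k := by
        rw [norm_smul, norm_div, norm_pow, Complex.norm_natCast]
        gcongr
        exact norm_pow_le' a hk
    _ ≤ ‖w‖ ^ (k + 1) / k ! * ‖a‖ ^ k := by gcongr
    _ = ‖w‖ * ((‖w‖ * ‖a‖) ^ k / k !) := by ring

theorem phi_zero_left (w : ℂ) : phi (0 : ℂ) w = w := by
  rw [phi, tsum_eq_single 0 fun k hk => by simp [zero_pow hk]]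
  simp

theorem mul_phi (μ w : ℂ) : μ * phi μ w = Complex.exp (μ * w) - 1 := by
  have hexp : HasSum (fun k : ℕ => (μ * w) ^ (k + 1) / ((k + 1)! : ℂ))
      (Complex.exp (μ * w) - 1) := by
    rw [Complex.exp_eq_exp_ℂ]
    simpa using (hasSum_nat_add_iff' 1).mpr (NormedSpace.expSeries_div_hasSum_exp (μ * w))
  rw [phi, ← (summable_phi μ w).tsum_mul_left, ← hexp.tsum_eq]
  congr 1 with k
  rw [smul_eq_mul, mul_pow, pow_succ]
  ring

end Phi

theorem eq_zero_of_intCast_mem_Sigma1 {n : ℤ} (hn : (n : ℂ) ∈ Sigma1) : n = 0 := by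
  obtain ⟨hre₁, hre₂, -, him⟩ := hn
  simp only [Complex.sub_re, Complex.intCast_re, Complex.one_re, Complex.sub_im,
    Complex.intCast_im, Complex.one_im, sub_zero] at hre₁ hre₂ him
  have h₀ : 0 ≤ n := by exact_mod_cast (by linarith : (0 : ℝ) ≤ n)
  have h₁ : n ≤ 1 := by exact_mod_cast (by linarith : (n : ℝ) ≤ 1)
  interval_cases n
  · rfl
  · norm_num at him

theorem mul_phi_add_sub_phi (μ w z : ℂ) :
    μ * (phi μ (w + z) - phi μ w) = Complex.exp (μ * w) * (Complex.exp (μ * z) - 1) := by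
  rw [mul_sub, mul_phi, mul_phi, mul_add, Complex.exp_add]
  ring

theorem phi_add_twoPiI_sub_phi_ne_zero {μ : ℂ} (hμ : μ ∈ Sigma1) (w : ℂ) :
    phi μ (w + twoPiI) - phi μ w ≠ 0 := by
  have htwoPiI : twoPiI ≠ 0 := by simp [twoPiI, Real.pi_ne_zero]
  rcases eq_or_ne μ 0 with rfl | hμ₀
  · simpa [phi_zero_left] using htwoPiI
  intro h
  have hexp : Complex.exp (μ * twoPiI) = 1 := by
    have := mul_phi_add_sub_phi μ w twoPiI
    rw [h, mul_zero, zero_eq_mul] at this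
    exact sub_eq_zero.mp (this.resolve_left (Complex.exp_ne_zero _))
  obtain ⟨n, hn⟩ := Complex.exp_eq_one_iff.mp hexp
  obtain rfl : μ = n := mul_right_cancel₀ htwoPiI hn
  exact hμ₀ (by simp [eq_zero_of_intCast_mem_Sigma1 hμ])

theorem Module.End.exists_hasEigenvector_of_commute {K V : Type*} [Field K] [IsAlgClosed K]
    [AddCommGroup V] [Module K V] [FiniteDimensional K V] {f g : Module.End K V}
    (hfg : Commute f g) {μ : K} (hμ : g.HasEigenvalue μ) :
    ∃ ν v, f.HasEigenvector ν v ∧ g.HasEigenvector μ v := by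
  have hE : ∀ x ∈ g.eigenspace μ, f x ∈ g.eigenspace μ := fun x hx =>
    Module.End.mapsTo_genEigenspace_of_comm hfg.symm μ 1 hx
  have : Nontrivial (g.eigenspace μ) := Submodule.nontrivial_iff_ne_bot.mpr hμ
  obtain ⟨ν, hν⟩ := Module.End.exists_eigenvalue (f.restrict hE)
  obtain ⟨⟨v, hvμ⟩, hv⟩ := hν.exists_hasEigenvector
  have hv₀ : v ≠ 0 := fun h => hv.2 (Subtype.ext h)
  refine ⟨ν, v, Module.End.hasEigenvector_iff.mpr ⟨?_, hv₀⟩,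
    Module.End.hasEigenvector_iff.mpr ⟨hvμ, hv₀⟩⟩
  exact Module.End.mem_eigenspace_iff.mpr (congrArg Subtype.val hv.apply_eq_smul)

-- Any matrix norm would do: it only provides summability, and its topology is the product one,
-- so `phiMat A w` is `phi A w`.
attribute [local instance] Matrix.linftyOpNormedAddCommGroup Matrix.linftyOpNormedRing
  Matrix.linftyOpNormedAlgebra

theorem phi_mulVec_of_hasEigenvector {n : Type*} [Fintype n] [DecidableEq n]
    {A : Matrix n n ℂ} {μ : ℂ} {v : n → ℂ} (hv : Module.End.HasEigenvector (Matrix.toLin' A) μ v)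
    (w : ℂ) : phi A w *ᵥ v = phi μ w • v := by
  have hA : HasSum (fun k : ℕ => ((w ^ (k + 1) / ((k + 1)! : ℂ)) • A ^ k) *ᵥ v) (phi A w *ᵥ v) :=
    (summable_phi A w).hasSum.map (Matrix.mulVec.addMonoidHomLeft v)
      (continuous_id.matrix_mulVec continuous_const)
  have hμ : HasSum (fun k : ℕ => (w ^ (k + 1) / ((k + 1)! : ℂ) * μ ^ k) • v) (phi μ w • v) :=
    (summable_phi μ w).hasSum.smul_const v
  refine hA.unique (hμ.congr_fun fun k => ?_)
  rw [Matrix.smul_mulVec, ← Matrix.toLin'_apply, Matrix.toLin'_pow, hv.pow_apply, smul_smul]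

theorem phiMat_variation_isUnit_general {M : ℕ} (A : Matrix (Fin M) (Fin M) ℂ)
    (hA : spectrum ℂ A ⊆ Sigma1) (w : ℂ) :
    IsUnit (phiMat A (w + twoPiI) - phiMat A w) := by
  change IsUnit (phi A (w + twoPiI) - phi A w)
  set D := phi A (w + twoPiI) - phi A w
  by_contra hD
  have hD₀ : Module.End.HasEigenvalue (Matrix.toLin' D) 0 := by
    rwa [Module.End.hasEigenvalue_iff_mem_spectrum, Matrix.spectrum_toLin', spectrum.zero_mem_iff]
  have hAD : Commute (Matrix.toLin' A) (Matrix.toLin' D) :=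
    ((commute_phi A _).sub_right (commute_phi A w)).map Matrix.toLinAlgEquiv'
  obtain ⟨μ, v, hAv, hDv⟩ := Module.End.exists_hasEigenvector_of_commute hAD hD₀
  have hμ : μ ∈ Sigma1 := hA <| by
    rw [← Matrix.spectrum_toLin']
    exact (Module.End.hasEigenvalue_of_hasEigenvector hAv).mem_spectrum
  have hDv_eq : D *ᵥ v = (phi μ (w + twoPiI) - phi μ w) • v := by
    rw [Matrix.sub_mulVec, phi_mulVec_of_hasEigenvector hAv, phi_mulVec_of_hasEigenvector hAv,
      sub_smul]
  have hDv₀ : D *ᵥ v = 0 := by simpa using hDv.apply_eq_smul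
  exact phi_add_twoPiI_sub_phi_ne_zero hμ w <|
    (smul_eq_zero.mp (hDv_eq.symm.trans hDv₀)).resolve_right hDv.2

/-- If the spectrum of `A` is contained in Σ₁, then for every `w ∈ ℂ` the variation
`φ_A(w + 2πi) − φ_A(w)` is an invertible matrix. -/
theorem phiMat_variation_isUnit {M : ℕ} (hM : 0 < M) (A : Matrix (Fin M) (Fin M) ℂ)
    (hA : spectrum ℂ A ⊆ Sigma1) (w : ℂ) :
    IsUnit (phiMat A (w + twoPiI) - phiMat A w) :=
  phiMat_variation_isUnit_general A hA w
end
end
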